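/- arXiv:math/9909180 — 2 statements merged into one kernel-verified Lean document; each statement's English description precedes it below -/
import Mathlib

section
/- Let g be a multiplicative function. Then for every x ≥ 1, ∑_{n≤x} g(n)(log n)/n = Σ₁ − Σ₂ + Σ₃, where Σ₁ = ∑_{p≤x} (g(p)log p/p) ∑_{m≤x/p} g(m)/m, Σ₂ = ∑_{p≤x} (g(p)log p/p) ∑_{m≤x/p, p∣m} g(m)/m, and Σ₃ = ∑_{r≥2} ∑_{p≤x^{1/r}} (g(p^r)log p^r/p^r) ∑_{m≤x/p^r, p∤m} g(m)/m. -/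
open Finset

noncomputable def Sterm (g : ℕ → ℂ) (x : ℝ) (r : ℕ) : ℂ :=
  ∑ p ∈ (Finset.range (⌊x ^ (1 / (r : ℝ))⌋₊ + 1)).filter Nat.Prime,
    g (p ^ r) * (Real.log ((p : ℝ) ^ r) : ℂ) / ((p : ℂ) ^ r) *
      ∑ m ∈ (Finset.Icc 1 ⌊x / (p : ℝ) ^ r⌋₊).filter (fun m => ¬ p ∣ m), g m / (m : ℂ)

lemma log_nat_eq (n : ℕ) (hn : n ≠ 0) :
    Real.log n = ∑ p ∈ n.primeFactors, Real.log ((p : ℝ) ^ (n.factorization p)) := by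
  conv_lhs => rw [← Nat.factorization_prod_pow_eq_self hn]
  rw [Finsupp.prod, Nat.support_factorization]
  push_cast
  rw [Real.log_prod]
  intro p hp
  have := (Nat.mem_primeFactors.mp hp).1.pos
  positivity

lemma main_eq (g : ℕ → ℂ)
    (hmul : ∀ m n : ℕ, Nat.Coprime m n → g (m * n) = g m * g n)
    (x : ℝ) (hx : 1 ≤ x) :
    ∑ n ∈ Finset.Icc 1 ⌊x⌋₊, g n * (Real.log n : ℂ) / (n : ℂ)
      = ∑ r ∈ Finset.Icc 1 ⌊x⌋₊, Sterm g x r := by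
  have hx0 : (0 : ℝ) < x := by linarith
  set N := ⌊x⌋₊ with hNdef
  have hNx : (N : ℝ) ≤ x := Nat.floor_le hx0.le
  set P : ℕ → Finset ℕ := fun r => (Finset.range (⌊x ^ (1 / (r : ℝ))⌋₊ + 1)).filter Nat.Prime
    with hP
  set M : ℕ → ℕ → Finset ℕ := fun r p =>
    (Finset.Icc 1 ⌊x / (p : ℝ) ^ r⌋₊).filter (fun m => ¬ p ∣ m) with hM
  calc
    ∑ n ∈ Finset.Icc 1 N, g n * (Real.log n : ℂ) / (n : ℂ)
      = ∑ a ∈ (Finset.Icc 1 N).sigma (fun n => n.primeFactors),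
          g a.1 * (Real.log ((a.2 : ℝ) ^ (a.1.factorization a.2)) : ℂ) / (a.1 : ℂ) := by
        rw [Finset.sum_sigma]
        refine Finset.sum_congr rfl fun n hn => ?_
        have hn0 : n ≠ 0 := by
          have := (Finset.mem_Icc.mp hn).1; omega
        rw [log_nat_eq n hn0]
        push_cast
        rw [Finset.mul_sum, Finset.sum_div]
    _ = ∑ b ∈ (Finset.Icc 1 N).sigma (fun r => (P r).sigma (fun p => M r p)),
          g (b.2.1 ^ b.1) * (Real.log ((b.2.1 : ℝ) ^ b.1) : ℂ) / ((b.2.1 : ℂ) ^ b.1)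
            * (g b.2.2 / (b.2.2 : ℂ)) := by
        refine Finset.sum_bij'
          (fun a _ => ⟨a.1.factorization a.2, a.2, a.1 / a.2 ^ (a.1.factorization a.2)⟩)
          (fun b _ => ⟨b.2.1 ^ b.1 * b.2.2, b.2.1⟩) ?_ ?_ ?_ ?_ ?_
        · rintro ⟨n, p⟩ ha
          rw [Finset.mem_sigma] at ha
          dsimp only at ha ⊢
          obtain ⟨hn, hp⟩ := ha
          obtain ⟨hn1, hnN⟩ := Finset.mem_Icc.mp hn
          obtain ⟨hpp, hpd, hn0⟩ := Nat.mem_primeFactors.mp hp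
          set r := n.factorization p with hr
          set m := n / p ^ r with hm
          have hr1 : 0 < r := hpp.factorization_pos_of_dvd hn0 hpd
          have hdvd : p ^ r ∣ n := Nat.ordProj_dvd n p
          have hprn : p ^ r ≤ n := Nat.le_of_dvd (by omega) hdvd
          have hrN : r ≤ N := by
            have h1 : r < 2 ^ r := Nat.lt_two_pow_self (n := r)
            have h2 : 2 ^ r ≤ p ^ r := Nat.pow_le_pow_left hpp.two_le r
            omega
          have hnx : (n : ℝ) ≤ x := le_trans (by exact_mod_cast hnN) hNx
          have hprx : ((p : ℝ)) ^ r ≤ x := by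
            calc ((p : ℝ)) ^ r = ((p ^ r : ℕ) : ℝ) := by push_cast; ring
            _ ≤ (n : ℝ) := by exact_mod_cast hprn
            _ ≤ x := hnx
          have hr0 : (r : ℝ) ≠ 0 := Nat.cast_ne_zero.mpr (Nat.one_le_iff_ne_zero.mp hr1)
          have hp0 : (0 : ℝ) < p := by exact_mod_cast hpp.pos
          refine Finset.mem_sigma.mpr ⟨Finset.mem_Icc.mpr ⟨hr1, hrN⟩,
            Finset.mem_sigma.mpr ⟨?_, ?_⟩⟩
          · refine Finset.mem_filter.mpr ⟨Finset.mem_range.mpr (Nat.lt_succ_of_le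
              (Nat.le_floor ?_)), hpp⟩
            have heq : (p : ℝ) = ((p : ℝ) ^ (r : ℕ)) ^ (1 / (r : ℝ)) := by
              rw [← Real.rpow_natCast (p : ℝ) r, ← Real.rpow_mul hp0.le, mul_one_div,
                div_self hr0, Real.rpow_one]
            rw [heq]
            exact Real.rpow_le_rpow (by positivity) hprx (by positivity)
          · refine Finset.mem_filter.mpr ⟨Finset.mem_Icc.mpr ⟨?_, Nat.le_floor ?_⟩, ?_⟩
            · exact Nat.ordCompl_pos p hn0
            · rw [le_div_iff₀ (by positivity)]
              have : ((p ^ r * m : ℕ) : ℝ) ≤ x := by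
                rw [Nat.ordProj_mul_ordCompl_eq_self n p]; exact hnx
              calc (m : ℝ) * (p : ℝ) ^ r = ((p ^ r * m : ℕ) : ℝ) := by push_cast; ring
              _ ≤ x := this
            · exact Nat.not_dvd_ordCompl hpp hn0
        · rintro ⟨r, p, m⟩ hb
          rw [Finset.mem_sigma, Finset.mem_sigma] at hb
          dsimp only at hb ⊢
          obtain ⟨hrmem, hpmem, hmmem⟩ := hb
          obtain ⟨hr1, hrN⟩ := Finset.mem_Icc.mp hrmem
          obtain ⟨-, hpp⟩ := Finset.mem_filter.mp hpmem
          obtain ⟨hmIcc, hpm⟩ := Finset.mem_filter.mp hmmem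
          obtain ⟨hm1, hmfl⟩ := Finset.mem_Icc.mp hmIcc
          have hp0 : (0 : ℝ) < p := by exact_mod_cast hpp.pos
          have hmx : (m : ℝ) ≤ x / (p : ℝ) ^ r :=
            (Nat.le_floor_iff (by positivity)).mp hmfl
          have hnx : ((p ^ r * m : ℕ) : ℝ) ≤ x := by
            push_cast
            rw [mul_comm]
            calc (m : ℝ) * (p : ℝ) ^ r ≤ (x / (p : ℝ) ^ r) * (p : ℝ) ^ r :=
              mul_le_mul_of_nonneg_right hmx (by positivity)
            _ = x := by field_simp
          have hnpos : 0 < p ^ r * m := Nat.mul_pos (pow_pos hpp.pos r) hm1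
          refine Finset.mem_sigma.mpr ⟨Finset.mem_Icc.mpr ⟨hnpos, Nat.le_floor hnx⟩, ?_⟩
          exact Nat.mem_primeFactors.mpr ⟨hpp,
            dvd_mul_of_dvd_left (dvd_pow_self p (Nat.one_le_iff_ne_zero.mp hr1)) m, hnpos.ne'⟩
        · rintro ⟨n, p⟩ ha
          dsimp only
          rw [Nat.ordProj_mul_ordCompl_eq_self]
        · rintro ⟨r, p, m⟩ hb
          rw [Finset.mem_sigma, Finset.mem_sigma] at hb
          dsimp only at hb ⊢
          obtain ⟨hrmem, hpmem, hmmem⟩ := hb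
          obtain ⟨-, hpp⟩ := Finset.mem_filter.mp hpmem
          obtain ⟨hmIcc, hpm⟩ := Finset.mem_filter.mp hmmem
          have hm0 : m ≠ 0 := by
            have := (Finset.mem_Icc.mp hmIcc).1; omega
          have hfact : (p ^ r * m).factorization p = r := by
            rw [Nat.factorization_mul (pow_ne_zero r hpp.pos.ne') hm0]
            simp [hpp.factorization_pow, Nat.factorization_eq_zero_of_not_dvd hpm]
          simp only [hfact, Nat.mul_div_cancel_left m (pow_pos hpp.pos r)]
        · rintro ⟨n, p⟩ ha
          rw [Finset.mem_sigma] at ha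
          dsimp only at ha ⊢
          obtain ⟨hn, hp⟩ := ha
          obtain ⟨hn1, hnN⟩ := Finset.mem_Icc.mp hn
          obtain ⟨hpp, hpd, hn0⟩ := Nat.mem_primeFactors.mp hp
          set r := n.factorization p with hr
          set m := n / p ^ r with hm
          have heq : p ^ r * m = n := Nat.ordProj_mul_ordCompl_eq_self n p
          have hm0 : m ≠ 0 := (Nat.ordCompl_pos p hn0).ne'
          have hcop : Nat.Coprime (p ^ r) m :=
            Nat.Coprime.pow_left r ((Nat.Prime.coprime_iff_not_dvd hpp).mpr
              (Nat.not_dvd_ordCompl hpp hn0))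
          have hg : g n = g (p ^ r) * g m := by
            conv_lhs => rw [← heq]
            exact hmul _ _ hcop
          have hn' : (n : ℂ) = (p : ℂ) ^ r * m := by
            rw [← heq]; push_cast; ring
          have hpC : (p : ℂ) ≠ 0 := Nat.cast_ne_zero.mpr hpp.pos.ne'
          have hmC : (m : ℂ) ≠ 0 := Nat.cast_ne_zero.mpr hm0
          rw [hg, hn']
          field_simp
    _ = ∑ r ∈ Finset.Icc 1 N, Sterm g x r := by
        rw [Finset.sum_sigma]
        refine Finset.sum_congr rfl fun r _ => ?_
        rw [Finset.sum_sigma]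
        unfold Sterm
        refine Finset.sum_congr rfl fun p _ => ?_
        rw [Finset.mul_sum]

lemma sterm_one (g : ℕ → ℂ) (x : ℝ) :
    Sterm g x 1
      = (∑ p ∈ (Finset.range (⌊x⌋₊ + 1)).filter Nat.Prime,
        g p * (Real.log p : ℂ) / (p : ℂ) * ∑ m ∈ Finset.Icc 1 ⌊x / p⌋₊, g m / (m : ℂ))
      - ∑ p ∈ (Finset.range (⌊x⌋₊ + 1)).filter Nat.Prime,
        g p * (Real.log p : ℂ) / (p : ℂ) *
          ∑ m ∈ (Finset.Icc 1 ⌊x / p⌋₊).filter (fun m => p ∣ m), g m / (m : ℂ) := by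
  unfold Sterm
  rw [← Finset.sum_sub_distrib]
  simp only [Nat.cast_one, Real.rpow_one, pow_one, div_one]
  refine Finset.sum_congr rfl fun p _ => ?_
  rw [← mul_sub]
  congr 1
  rw [eq_sub_iff_add_eq, add_comm]
  exact Finset.sum_filter_add_sum_filter_not _ _ _

lemma sterm_zero (g : ℕ → ℂ) (x : ℝ) (hx : 1 ≤ x) (r : ℕ) (hr : 2 ≤ r)
    (hbig : x < 2 ^ r) : Sterm g x r = 0 := by
  have hx0 : (0 : ℝ) < x := by linarith
  have hr0 : (r : ℝ) ≠ 0 := by positivity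
  have hfl : ⌊x ^ (1 / (r : ℝ))⌋₊ < 2 := by
    rw [Nat.floor_lt (by positivity)]
    have h2 : (2 : ℝ) = ((2 : ℝ) ^ (r : ℕ)) ^ (1 / (r : ℝ)) := by
      rw [← Real.rpow_natCast (2 : ℝ) r, ← Real.rpow_mul (by norm_num), mul_one_div,
        div_self hr0, Real.rpow_one]
    calc x ^ (1 / (r : ℝ)) < ((2 : ℝ) ^ (r : ℕ)) ^ (1 / (r : ℝ)) := by
          apply Real.rpow_lt_rpow hx0.le hbig (by positivity)
      _ = 2 := h2.symm
  unfold Sterm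
  apply Finset.sum_eq_zero
  intro p hp
  obtain ⟨hpr, hpp⟩ := Finset.mem_filter.mp hp
  have := Finset.mem_range.mp hpr
  have := hpp.two_le
  omega

lemma tsum_part (g : ℕ → ℂ) (x : ℝ) (hx : 1 ≤ x) :
    (∑' r : ℕ, Sterm g x (r + 2)) = ∑ r ∈ Finset.Icc 2 ⌊x⌋₊, Sterm g x r := by
  set N := ⌊x⌋₊ with hN
  have hN1 : 1 ≤ N := Nat.le_floor (by exact_mod_cast hx)
  rw [tsum_eq_sum (s := Finset.range (N - 1)) ?side]
  · refine Finset.sum_bij' (fun r _ => r + 2) (fun r _ => r - 2) ?_ ?_ ?_ ?_ ?_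
    · intro a ha
      have := Finset.mem_range.mp ha
      rw [Finset.mem_Icc]; omega
    · intro a ha
      have := Finset.mem_Icc.mp ha
      rw [Finset.mem_range]; omega
    · intro a ha; omega
    · intro a ha
      have := Finset.mem_Icc.mp ha
      omega
    · intro a ha; rfl
  · intro r hr
    have hrge : N - 1 ≤ r := by
      by_contra h
      exact hr (Finset.mem_range.mpr (by omega))
    apply sterm_zero g x hx _ (by omega)
    have h1 : x < (N : ℝ) + 1 := Nat.lt_floor_add_one x
    have h2 : N + 1 ≤ 2 ^ (r + 2) := by
      have := Nat.lt_two_pow_self (n := r + 2)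
      omega
    calc x < (N : ℝ) + 1 := h1
      _ ≤ ((2 ^ (r + 2) : ℕ) : ℝ) := by exact_mod_cast h2
      _ = (2 : ℝ) ^ (r + 2) := by push_cast; ring

/-- For a multiplicative function `g` and `x ≥ 1`,
`∑_{n≤x} g(n) log n / n = Σ₁ − Σ₂ + Σ₃`. -/
theorem stmt_1 (g : ℕ → ℂ) (hg1 : g 1 = 1)
    (hmul : ∀ m n : ℕ, Nat.Coprime m n → g (m * n) = g m * g n)
    (x : ℝ) (hx : 1 ≤ x) :
    ∑ n ∈ Finset.Icc 1 ⌊x⌋₊, g n * (Real.log n : ℂ) / (n : ℂ)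
    = (∑ p ∈ (Finset.range (⌊x⌋₊ + 1)).filter Nat.Prime,
        g p * (Real.log p : ℂ) / (p : ℂ) * ∑ m ∈ Finset.Icc 1 ⌊x / p⌋₊, g m / (m : ℂ))
      - (∑ p ∈ (Finset.range (⌊x⌋₊ + 1)).filter Nat.Prime,
        g p * (Real.log p : ℂ) / (p : ℂ) *
          ∑ m ∈ (Finset.Icc 1 ⌊x / p⌋₊).filter (fun m => p ∣ m), g m / (m : ℂ))
      + ∑' r : ℕ, ∑ p ∈ (Finset.range (⌊x ^ (1 / (r + 2 : ℝ))⌋₊ + 1)).filter Nat.Prime,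
          g (p ^ (r + 2)) * (Real.log ((p : ℝ) ^ (r + 2)) : ℂ) / ((p : ℂ) ^ (r + 2)) *
            ∑ m ∈ (Finset.Icc 1 ⌊x / (p : ℝ) ^ (r + 2)⌋₊).filter (fun m => ¬ p ∣ m),
              g m / (m : ℂ) := by
  have hN1 : 1 ≤ ⌊x⌋₊ := Nat.le_floor (by exact_mod_cast hx)
  have hsplit : Finset.Icc 1 ⌊x⌋₊ = insert 1 (Finset.Icc 2 ⌊x⌋₊) := by
    ext k
    simp only [Finset.mem_Icc, Finset.mem_insert]
    omega
  have hbody : ∀ r : ℕ,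
      (∑ p ∈ (Finset.range (⌊x ^ (1 / (r + 2 : ℝ))⌋₊ + 1)).filter Nat.Prime,
          g (p ^ (r + 2)) * (Real.log ((p : ℝ) ^ (r + 2)) : ℂ) / ((p : ℂ) ^ (r + 2)) *
            ∑ m ∈ (Finset.Icc 1 ⌊x / (p : ℝ) ^ (r + 2)⌋₊).filter (fun m => ¬ p ∣ m),
              g m / (m : ℂ)) = Sterm g x (r + 2) := by
    intro r
    simp only [Sterm, Nat.cast_add, Nat.cast_ofNat]
  rw [main_eq g hmul x hx, hsplit, Finset.sum_insert (by simp), sterm_one,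
    tsum_congr hbody, tsum_part g x hx]
end

section
/- Let g be a nonnegative multiplicative function such that ∑_{p≤x} g(p)(log p)/p = κ log x + O(1) for some real κ ≥ 0 and all x ≥ 2, and such that ∑_p ∑_{r≥2} g(p^r)/p^r < ∞. Then ∑_{m≤x} g(m)/m ≪ (log x)^κ for all x ≥ 2. -/
open Finset

lemma abel_aux (a : ℕ → ℝ) (ha : ∀ n, 0 ≤ a n) (κ C : ℝ) (hκ : 0 ≤ κ)
    (hW : ∀ N : ℕ, 2 ≤ N → ∑ n ∈ range (N + 1), a n ≤ κ * Real.log N + C) :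
    ∀ N : ℕ, 2 ≤ N → ∑ n ∈ Icc 2 N, a n / Real.log n ≤
      (∑ n ∈ range (N + 1), a n) / Real.log N
        + κ * (Real.log (Real.log N) - Real.log (Real.log 2))
        + C * (1 / Real.log 2 - 1 / Real.log N) := by
  intro N hN
  induction N with
  | zero => omega
  | succ N ih =>
    rcases Nat.lt_or_ge N 2 with hN2 | hN2
    · interval_cases N
      · omega
      · norm_num
        have h2 : (0:ℝ) < Real.log 2 := Real.log_pos (by norm_num)
        have h3 : a 2 ≤ ∑ x ∈ range 3, a x := by
          rw [Finset.sum_range_succ, Finset.sum_range_succ, Finset.sum_range_one]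
          linarith [ha 0, ha 1]
        gcongr
    · have h2 : (0:ℝ) < Real.log 2 := Real.log_pos (by norm_num)
      have hNR : (2:ℝ) ≤ (N:ℝ) := by exact_mod_cast hN2
      have hlogN : Real.log 2 ≤ Real.log N := Real.log_le_log (by norm_num) hNR
      have hlogNpos : (0:ℝ) < Real.log N := lt_of_lt_of_le h2 hlogN
      have hcast : ((N+1 : ℕ) : ℝ) = (N:ℝ) + 1 := by push_cast; ring
      have hlogN1 : Real.log N ≤ Real.log ((N:ℝ)+1) := Real.log_le_log (by linarith) (by linarith)
      have hlogN1pos : (0:ℝ) < Real.log ((N:ℝ)+1) := lt_of_lt_of_le hlogNpos hlogN1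
      have hδ : (0:ℝ) ≤ 1 / Real.log N - 1 / Real.log ((N:ℝ)+1) := by
        have := one_div_le_one_div_of_le hlogNpos hlogN1
        linarith
      -- key log inequality
      have hkey : (Real.log ((N:ℝ)+1) - Real.log N) / Real.log ((N:ℝ)+1)
          ≤ Real.log (Real.log ((N:ℝ)+1)) - Real.log (Real.log N) := by
        have h1 : Real.log (Real.log N / Real.log ((N:ℝ)+1))
            ≤ Real.log N / Real.log ((N:ℝ)+1) - 1 :=
          Real.log_le_sub_one_of_pos (by positivity)
        rw [Real.log_div (ne_of_gt hlogNpos) (ne_of_gt hlogN1pos)] at h1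
        have h2' : Real.log N / Real.log ((N:ℝ)+1) - 1
            = -((Real.log ((N:ℝ)+1) - Real.log N) / Real.log ((N:ℝ)+1)) := by
          field_simp
          ring
        rw [h2'] at h1
        linarith
      have hWN : ∑ n ∈ range (N + 1), a n ≤ κ * Real.log N + C := hW N hN2
      have hWnn : (0:ℝ) ≤ ∑ n ∈ range (N + 1), a n := Finset.sum_nonneg fun n _ => ha n
      have ih' := ih hN2
      have hsum : ∑ n ∈ Icc 2 (N+1), a n / Real.log n
          = (∑ n ∈ Icc 2 N, a n / Real.log n) + a (N+1) / Real.log ((N+1 : ℕ)) :=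
        Finset.sum_Icc_succ_top (by omega) _
      have hWsucc : ∑ n ∈ range (N + 1 + 1), a n
          = (∑ n ∈ range (N + 1), a n) + a (N+1) := Finset.sum_range_succ a (N+1)
      rw [hsum, hWsucc]
      push_cast
      set W := ∑ n ∈ range (N + 1), a n with hWdef
      set u := Real.log N
      set v := Real.log ((N:ℝ)+1)
      -- goal: S + a(N+1)/v ≤ (W + a(N+1))/v + κ*(log v - loglog2) + C*(1/log2 - 1/v)
      have hmain : W * (1/u - 1/v) ≤ κ * (Real.log v - Real.log u) + C * (1/u - 1/v) := by
        have h1 : W * (1/u - 1/v) ≤ (κ * u + C) * (1/u - 1/v) :=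
          mul_le_mul_of_nonneg_right hWN hδ
        have h2' : κ * (u * (1/u - 1/v)) ≤ κ * (Real.log v - Real.log u) := by
          apply mul_le_mul_of_nonneg_left _ hκ
          have : u * (1/u - 1/v) = (v - u)/v := by field_simp
          rw [this]; exact hkey
        nlinarith [h2']
      have expand : (W + a (N+1))/v = W/u + a (N+1)/v + W*(1/v - 1/u) := by
        field_simp; ring
      rw [expand]
      linarith [ih']


set_option maxHeartbeats 1000000 in
/-- A nonnegative multiplicative function with Mertens-type mean `κ`
over primes and convergent higher-prime-power contribution satisfies
`∑_{m≤x} g(m)/m ≪ (log x)^κ`. -/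
theorem stmt_2 (g : ℕ → ℝ) (hg1 : g 1 = 1)
    (hmul : ∀ m n : ℕ, Nat.Coprime m n → g (m * n) = g m * g n)
    (hnn : ∀ n, 0 ≤ g n) (κ : ℝ) (hκ : 0 ≤ κ)
    (hmertens : ∃ C : ℝ, ∀ x : ℝ, 2 ≤ x →
      |(∑ p ∈ (Finset.range (⌊x⌋₊ + 1)).filter Nat.Prime,
          g p * Real.log p / p) - κ * Real.log x| ≤ C)
    (hinner : ∀ p : Nat.Primes, Summable (fun r : ℕ => g ((p : ℕ) ^ (r + 2)) / ((p : ℕ) : ℝ) ^ (r + 2)))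
    (htail : Summable (fun p : Nat.Primes =>
      ∑' r : ℕ, g ((p : ℕ) ^ (r + 2)) / ((p : ℕ) : ℝ) ^ (r + 2))) :
    ∃ C : ℝ, ∀ x : ℝ, 2 ≤ x →
      ∑ m ∈ Finset.Icc 1 ⌊x⌋₊, g m / m ≤ C * Real.log x ^ κ := by
  obtain ⟨C, hC⟩ := hmertens
  have h2 : (0:ℝ) < Real.log 2 := Real.log_pos (by norm_num)
  have hC0 : 0 ≤ C := le_trans (abs_nonneg _) (hC 2 le_rfl)
  -- the function f m = g m / m
  set f : ℕ → ℝ := fun m => g m / m with hf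
  have hf1 : f 1 = 1 := by simp [hf, hg1]
  have hfnn : ∀ m, 0 ≤ f m := fun m => div_nonneg (hnn m) (Nat.cast_nonneg m)
  have hfmul : ∀ {m n : ℕ}, Nat.Coprime m n → f (m * n) = f m * f n := by
    intro m n h
    simp only [hf]
    rw [hmul m n h, Nat.cast_mul, div_mul_div_comm]
  -- the tail function
  set tt : ℕ → ℝ := fun p => ∑' r : ℕ, g (p ^ (r + 2)) / (p : ℝ) ^ (r + 2) with htt
  have httnn : ∀ p : ℕ, 0 ≤ tt p :=
    fun p => tsum_nonneg (fun r => div_nonneg (hnn _) (by positivity))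
  set T : ℝ := ∑' p : Nat.Primes, tt (p : ℕ) with hT
  -- summability of Euler factors
  have hsumf : ∀ {p : ℕ}, p.Prime → Summable (fun n : ℕ => f (p ^ n)) := by
    intro p hp
    have h1 : Summable (fun r : ℕ => f (p ^ (r + 2))) := by
      have := hinner ⟨p, hp⟩
      refine this.congr fun r => ?_
      simp [hf, Nat.cast_pow]
    exact (summable_nat_add_iff 2).mp h1
  have hsumfn : ∀ {p : ℕ}, p.Prime → Summable (fun n : ℕ => ‖f (p ^ n)‖) := by
    intro p hp
    refine (hsumf hp).abs.congr fun n => ?_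
    rw [Real.norm_eq_abs]
  -- the weighted prime sum for Abel summation
  set a : ℕ → ℝ := fun n => if n.Prime then g n * Real.log n / n else 0 with ha
  have hann : ∀ n, 0 ≤ a n := by
    intro n
    simp only [ha]
    split
    · exact div_nonneg (mul_nonneg (hnn n) (Real.log_natCast_nonneg n)) (Nat.cast_nonneg n)
    · exact le_refl 0
  have hWa : ∀ N : ℕ, 2 ≤ N → ∑ n ∈ range (N + 1), a n ≤ κ * Real.log N + C := by
    intro N hN
    have hNx : (2:ℝ) ≤ (N:ℝ) := by exact_mod_cast hN
    have := hC (N : ℝ) hNx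
    rw [Nat.floor_natCast] at this
    have heq : ∑ n ∈ range (N + 1), a n
        = ∑ p ∈ (Finset.range (N + 1)).filter Nat.Prime, g p * Real.log p / p := by
      rw [Finset.sum_filter]
    rw [heq]
    linarith [(abs_le.mp this).2]
  -- main: fix x
  refine ⟨Real.exp (κ + 2 * C / Real.log 2 - κ * Real.log (Real.log 2) + T), fun x hx => ?_⟩
  set N : ℕ := ⌊x⌋₊ with hN
  have hN2 : 2 ≤ N := Nat.le_floor (by exact_mod_cast hx)
  have hNR : (2:ℝ) ≤ (N:ℝ) := by exact_mod_cast hN2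
  have hlogN : (0:ℝ) < Real.log N := Real.log_pos (by linarith)
  have hlog2N : Real.log 2 ≤ Real.log N := Real.log_le_log (by norm_num) hNR
  -- Euler product
  obtain ⟨hsummable, hhs⟩ :=
    EulerProduct.summable_and_hasSum_smoothNumbers_prod_primesBelow_tsum hf1 hfmul hsumfn (N + 1)
  -- partial sum ≤ tsum over smooth numbers
  have hmem : ∀ m ∈ Icc 1 N, m ∈ (N + 1).smoothNumbers := by
    intro m hm
    rw [Finset.mem_Icc] at hm
    exact Nat.mem_smoothNumbers_of_lt (by omega) (by omega)
  have hindsum : Summable (Set.indicator ((N + 1).smoothNumbers) f) :=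
    summable_subtype_iff_indicator.mp hhs.summable
  have hS : ∑ m ∈ Icc 1 N, f m ≤ ∑' m : (N + 1).smoothNumbers, f m := by
    calc ∑ m ∈ Icc 1 N, f m
        = ∑ m ∈ Icc 1 N, Set.indicator ((N + 1).smoothNumbers) f m :=
          Finset.sum_congr rfl fun m hm => (Set.indicator_of_mem (hmem m hm) f).symm
      _ ≤ ∑' m, Set.indicator ((N + 1).smoothNumbers) f m :=
          Summable.sum_le_tsum _ (fun i _ => Set.indicator_nonneg (fun j _ => hfnn j) i) hindsum
      _ = ∑' m : (N + 1).smoothNumbers, f m := (_root_.tsum_subtype _ f).symm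
  have hprod : ∑' m : (N + 1).smoothNumbers, f m
      = ∏ p ∈ (N + 1).primesBelow, ∑' n : ℕ, f (p ^ n) := hhs.tsum_eq
  -- each Euler factor
  have hfactor : ∀ p ∈ (N + 1).primesBelow, (∑' n : ℕ, f (p ^ n)) = 1 + (g p / p + tt p) := by
    intro p hp
    have hpp := Nat.prime_of_mem_primesBelow hp
    have h0 : Summable (fun n : ℕ => f (p ^ n)) := hsumf hpp
    have h1 : Summable (fun n : ℕ => f (p ^ (n + 1))) := (summable_nat_add_iff 1).mpr h0
    rw [Summable.tsum_eq_zero_add h0, Summable.tsum_eq_zero_add h1]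
    have ht : ∑' n : ℕ, f (p ^ (n + 1 + 1)) = tt p := by
      refine tsum_congr fun r => ?_
      simp [hf, Nat.cast_pow]
    rw [ht]
    simp [hf, hg1]
  have hfacnn : ∀ p ∈ (N + 1).primesBelow, (0:ℝ) ≤ ∑' n : ℕ, f (p ^ n) :=
    fun p _ => tsum_nonneg fun n => hfnn _
  have hprodle : ∏ p ∈ (N + 1).primesBelow, (∑' n : ℕ, f (p ^ n))
      ≤ Real.exp (∑ p ∈ (N + 1).primesBelow, (g p / p + tt p)) := by
    rw [Real.exp_sum]
    refine Finset.prod_le_prod hfacnn fun p hp => ?_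
    rw [hfactor p hp, add_comm]
    exact Real.add_one_le_exp _
  -- bound the prime sum via Abel summation
  have hprimesum : ∑ p ∈ (N + 1).primesBelow, g p / p = ∑ n ∈ Icc 2 N, a n / Real.log n := by
    have hset : (N + 1).primesBelow = (Icc 2 N).filter Nat.Prime := by
      ext p
      simp only [Nat.mem_primesBelow, Finset.mem_filter, Finset.mem_Icc]
      constructor
      · rintro ⟨h1', h2'⟩; exact ⟨⟨h2'.two_le, by omega⟩, h2'⟩
      · rintro ⟨⟨h1', h2'⟩, h3'⟩; exact ⟨by omega, h3'⟩
    rw [hset, Finset.sum_filter]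
    refine Finset.sum_congr rfl fun n hn => ?_
    rw [Finset.mem_Icc] at hn
    have hlogn : Real.log n ≠ 0 := by
      have : (0:ℝ) < Real.log n := Real.log_pos (by exact_mod_cast by omega)
      exact ne_of_gt this
    simp only [ha]
    split
    · rw [show g n * Real.log ↑n / ↑n / Real.log ↑n
          = g n / ↑n * (Real.log ↑n / Real.log ↑n) by ring, div_self hlogn, mul_one]
    · simp
  have habel := abel_aux a hann κ C hκ hWa N hN2
  have hWN : ∑ n ∈ range (N + 1), a n ≤ κ * Real.log N + C := hWa N hN2
  have hWnn : (0:ℝ) ≤ ∑ n ∈ range (N + 1), a n := Finset.sum_nonneg fun n _ => hann n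
  have hA : ∑ p ∈ (N + 1).primesBelow, g p / p
      ≤ κ * Real.log (Real.log N) + (κ + 2 * C / Real.log 2 - κ * Real.log (Real.log 2)) := by
    rw [hprimesum]
    have h1 : (∑ n ∈ range (N + 1), a n) / Real.log N ≤ κ + C / Real.log 2 := by
      have e1 : (∑ n ∈ range (N + 1), a n) / Real.log N
          ≤ (κ * Real.log N + C) / Real.log N := by gcongr
      have e2 : (κ * Real.log N + C) / Real.log N = κ + C / Real.log N := by
        field_simp
      have e3 : C / Real.log N ≤ C / Real.log 2 :=
        div_le_div_of_nonneg_left hC0 h2 hlog2N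
      rw [e2] at e1
      linarith
    have hexp : κ * (Real.log (Real.log (N:ℝ)) - Real.log (Real.log 2))
        = κ * Real.log (Real.log (N:ℝ)) - κ * Real.log (Real.log 2) := by ring
    have h4 : 2 * C / Real.log 2 = C / Real.log 2 + C / Real.log 2 := by ring
    have h2' : C * (1 / Real.log 2 - 1 / Real.log N) ≤ C / Real.log 2 := by
      have : (0:ℝ) ≤ 1 / Real.log N := by positivity
      have h3' : 1 / Real.log 2 - 1 / Real.log N ≤ 1 / Real.log 2 := by linarith
      calc C * (1 / Real.log 2 - 1 / Real.log N) ≤ C * (1 / Real.log 2) :=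
            mul_le_mul_of_nonneg_left h3' hC0
        _ = C / Real.log 2 := by ring
    linarith
  -- bound tail sum
  have hB : ∑ p ∈ (N + 1).primesBelow, tt p ≤ T := by
    have hTsub : Summable ((setOf Nat.Prime).indicator tt) :=
      summable_subtype_iff_indicator.mp htail
    have hTeq : T = ∑' n : ℕ, (setOf Nat.Prime).indicator tt n :=
      _root_.tsum_subtype (setOf Nat.Prime) tt
    calc ∑ p ∈ (N + 1).primesBelow, tt p
        = ∑ p ∈ (N + 1).primesBelow, (setOf Nat.Prime).indicator tt p :=
          Finset.sum_congr rfl fun p hp =>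
            (Set.indicator_of_mem (Nat.prime_of_mem_primesBelow hp) tt).symm
      _ ≤ ∑' n : ℕ, (setOf Nat.Prime).indicator tt n :=
          Summable.sum_le_tsum _ (fun i _ => Set.indicator_nonneg (fun j _ => httnn j) i) hTsub
      _ = T := hTeq.symm
  -- conclusion
  have hfin : ∑ m ∈ Icc 1 N, f m
      ≤ Real.exp (κ * Real.log (Real.log N)
          + (κ + 2 * C / Real.log 2 - κ * Real.log (Real.log 2) + T)) := by
    calc ∑ m ∈ Icc 1 N, f m ≤ ∏ p ∈ (N + 1).primesBelow, ∑' n : ℕ, f (p ^ n) :=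
          hS.trans (le_of_eq hprod)
      _ ≤ Real.exp (∑ p ∈ (N + 1).primesBelow, (g p / p + tt p)) := hprodle
      _ ≤ _ := by
          apply Real.exp_le_exp.mpr
          rw [Finset.sum_add_distrib]
          linarith
  have hrpow : Real.exp (κ * Real.log (Real.log N)) = Real.log N ^ κ := by
    rw [Real.rpow_def_of_pos hlogN, mul_comm]
  have hle : (Real.log N : ℝ) ^ κ ≤ Real.log x ^ κ := by
    apply Real.rpow_le_rpow (le_of_lt hlogN) _ hκ
    exact Real.log_le_log (by linarith) (Nat.floor_le (by linarith))
  calc ∑ m ∈ Icc 1 N, g m / m = ∑ m ∈ Icc 1 N, f m := rfl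
    _ ≤ Real.exp (κ * Real.log (Real.log N)
          + (κ + 2 * C / Real.log 2 - κ * Real.log (Real.log 2) + T)) := hfin
    _ = Real.exp (κ + 2 * C / Real.log 2 - κ * Real.log (Real.log 2) + T)
          * Real.log N ^ κ := by rw [← hrpow, ← Real.exp_add]; ring_nf
    _ ≤ _ := by
        apply mul_le_mul_of_nonneg_left hle (le_of_lt (Real.exp_pos _))
end
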